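/- arXiv:q-alg/9710007 — 2 statements merged into one kernel-verified Lean document; each statement's English description precedes it below -/
import Mathlib

section
/- Let Λ ∈ P_l^+, u ∈ {0,…,n−1}, and λ ∈ 𝒴(Λ). Assume that λ̲ ∈ 𝒴(Λ_{−u}) and that, for every k > 0 and r ∈ ℤ/nℤ, the number of length-k rows of λ̲ with left end of colour r equals the number of length-k rows of λ with right end of colour −r. Then the path π(λ̲) + ♯Λ := (π(λ̲)_k + ♯Λ)_{k≥0} is (♯Λ,Λ_{−u})-restricted; equivalently, λ̲ ∈ 𝒴(♯Λ,Λ_{−u}). -/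
open scoped BigOperators

namespace BF

/-- The fundamental weight `Λ_i`, viewed as the indicator function `ZMod n → ℤ` of `i`. -/
def Lam (n : ℕ) (i : ZMod n) : ZMod n → ℤ := fun j => if j = i then 1 else 0

/-- A weight is dominant if all its coefficients are nonnegative. -/
def Dominant (n : ℕ) (a : ZMod n → ℤ) : Prop := ∀ i, 0 ≤ a i

/-- The step weight of `e : ZMod n → ℕ`: its `Λ_j`-coefficient is `e (j-1) - e j`. -/
def stepWt (n : ℕ) (e : ZMod n → ℕ) : ZMod n → ℤ := fun j => (e (j - 1) : ℤ) - (e j : ℤ)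

/-- Membership in `A_l^+`: `d` is the step weight of some `e : ZMod n → ℕ` of total sum `l`. -/
def InA (n : ℕ) [NeZero n] (l : ℕ) (d : ZMod n → ℤ) : Prop :=
  ∃ e : ZMod n → ℕ, (∑ i, e i) = l ∧ d = stepWt n e

/-- The ground-state path of the weight `Λ`: `p̄_k (i) = Λ (i - k)`,
which is the coefficient form of `p̄_k = Λ_{v₀+k} + ⋯ + Λ_{v_{l-1}+k}`. -/
def gsp (n : ℕ) (Λ : ZMod n → ℤ) (k : ℕ) : ZMod n → ℤ := fun i => Λ (i - (k : ZMod n))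

/-- `p` is a `Λ`-path of level `l`. -/
def IsPath (n : ℕ) [NeZero n] (l : ℕ) (Λ : ZMod n → ℤ) (p : ℕ → ZMod n → ℤ) : Prop :=
  (∀ k, InA n l (fun i => p (k + 1) i - p k i)) ∧ ∃ K, ∀ k ≥ K, p k = gsp n Λ k

/-- The length of a `Λ`-path: least `K` with `p k = p̄ k` for all `k ≥ K`. -/
noncomputable def pathLen (n : ℕ) (Λ : ZMod n → ℤ) (p : ℕ → ZMod n → ℤ) : ℕ :=
  sInf {K | ∀ k ≥ K, p k = gsp n Λ k}

/-- `f : ℕ → ℕ` is a partition (rows are indexed from `0`). -/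
def IsPartitionF (f : ℕ → ℕ) : Prop := (∀ i, f (i + 1) ≤ f i) ∧ ∃ N, ∀ i ≥ N, f i = 0

/-- An `l`-multipartition. -/
def IsMP (l : ℕ) (lam : Fin l → ℕ → ℕ) : Prop := ∀ j, IsPartitionF (lam j)

/-- The data `v : Fin l → ℕ` of a decomposition `Λ = Λ_{v 0} + ⋯ + Λ_{v (l-1)}`
with `0 ≤ v 0 ≤ ⋯ ≤ v (l-1) < n`. -/
def SortedV (n l : ℕ) (v : Fin l → ℕ) : Prop := Monotone v ∧ ∀ j, v j < n

/-- The weight `Λ = Λ_{v 0} + ⋯ + Λ_{v (l-1)}` determined by `v`. -/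
def wtOf (n : ℕ) {l : ℕ} (v : Fin l → ℕ) : ZMod n → ℤ :=
  fun i => ((Finset.univ.filter fun j : Fin l => ((v j : ZMod n) = i)).card : ℤ)

/-- The colour of the node in (0-based) row `i`, (1-based) column `c` of component `j`:
`(c - (i+1) + v j) mod n`. -/
def colour (n : ℕ) {l : ℕ} (v : Fin l → ℕ) (j : Fin l) (i c : ℕ) : ZMod n :=
  (c : ZMod n) - (i : ZMod n) - 1 + (v j : ZMod n)

/-- `N^r(λ)`: the total number of nodes of colour `r` in the multipartition `λ`. -/
noncomputable def Ncolour (n : ℕ) {l : ℕ} (v : Fin l → ℕ) (lam : Fin l → ℕ → ℕ)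
    (r : ZMod n) : ℕ :=
  Nat.card {x : Fin l × ℕ × ℕ //
    1 ≤ x.2.2 ∧ x.2.2 ≤ lam x.1 x.2.1 ∧ colour n v x.1 x.2.1 x.2.2 = r}

/-- The height `f′_m` of the `m`-th column of the partition `f`. -/
noncomputable def colHt (f : ℕ → ℕ) (m : ℕ) : ℕ := Nat.card {i : ℕ // m ≤ f i}

/-- The function `e` whose step weight is the `k`-th step of `π(λ)`:
`e i = #{j : v j + k - λ^{(j)′}_{k+1} ≡ i mod n}`. -/
noncomputable def eFun (n : ℕ) {l : ℕ} (v : Fin l → ℕ) (lam : Fin l → ℕ → ℕ) (k : ℕ) :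
    ZMod n → ℕ :=
  fun i => Nat.card {j : Fin l //
    (v j : ZMod n) + (k : ZMod n) - (colHt (lam j) (k + 1) : ZMod n) = i}

/-- `p = π(λ)` where `λ` is an `l`-multipartition of highest weight `wtOf n v`. -/
def IsPi (n : ℕ) {l : ℕ} (v : Fin l → ℕ) (lam : Fin l → ℕ → ℕ)
    (p : ℕ → ZMod n → ℤ) : Prop :=
  (∀ k, (fun i => p (k + 1) i - p k i) = stepWt n (eFun n v lam k)) ∧
  ∃ K, ∀ k ≥ K, p k = gsp n (wtOf n v) k

/-- `λ` is cylindrical of highest weight `Λ = wtOf n v`. -/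
def Cylindrical (n : ℕ) {l : ℕ} (v : Fin l → ℕ) (lam : Fin l → ℕ → ℕ) : Prop :=
  (∀ (j : ℕ) (hj : j + 1 < l) (i : ℕ),
      lam ⟨j + 1, hj⟩ (i + (v ⟨j + 1, hj⟩ - v ⟨j, Nat.lt_of_succ_lt hj⟩)) ≤
        lam ⟨j, Nat.lt_of_succ_lt hj⟩ i) ∧
  ∀ (hl : 0 < l) (i : ℕ),
      lam ⟨0, hl⟩ (i + (n + v ⟨0, hl⟩ - v ⟨l - 1, Nat.sub_lt hl Nat.one_pos⟩)) ≤
        lam ⟨l - 1, Nat.sub_lt hl Nat.one_pos⟩ i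

/-- `λ` is higher than `μ`: every column of each component of `λ` is at most as high as
the corresponding column of `μ`. -/
def Higher {l : ℕ} (lam mu : Fin l → ℕ → ℕ) : Prop :=
  ∀ (j : Fin l) (k : ℕ), 1 ≤ k → colHt (lam j) k ≤ colHt (mu j) k

/-- `λ` is the highest-lift of the path `p`: it is a cylindrical multipartition with
`π(λ) = p` which is higher than every cylindrical multipartition mapping to `p`. -/
def IsHL (n : ℕ) {l : ℕ} (v : Fin l → ℕ) (lam : Fin l → ℕ → ℕ)
    (p : ℕ → ZMod n → ℤ) : Prop :=
  IsMP l lam ∧ Cylindrical n v lam ∧ IsPi n v lam p ∧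
    ∀ mu : Fin l → ℕ → ℕ, IsMP l mu → Cylindrical n v mu → IsPi n v mu p → Higher lam mu

/-- `λ ∈ 𝒴(Λ)` with `Λ = wtOf n v`. -/
def InY (n : ℕ) {l : ℕ} (v : Fin l → ℕ) (lam : Fin l → ℕ → ℕ) : Prop :=
  ∃ p, IsHL n v lam p

/-- `α′_r = -Λ_{r-1} + 2Λ_r - Λ_{r+1}`. -/
def alphaP (n : ℕ) (r : ZMod n) : ZMod n → ℤ :=
  fun i => -(Lam n (r - 1) i) + 2 * Lam n r i - Lam n (r + 1) i

/-- `ψ_r(k)`: the number of length-`k` rows of `λ` whose right end has colour `r`. -/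
noncomputable def psiCount (n : ℕ) {l : ℕ} (v : Fin l → ℕ) (lam : Fin l → ℕ → ℕ)
    (k : ℕ) (r : ZMod n) : ℕ :=
  Nat.card {x : Fin l × ℕ // lam x.1 x.2 = k ∧ colour n v x.1 x.2 k = r}

/-- The number of length-`k` rows of `λ` whose left end has colour `r`. -/
noncomputable def leftCount (n : ℕ) {l : ℕ} (v : Fin l → ℕ) (lam : Fin l → ℕ → ℕ)
    (k : ℕ) (r : ZMod n) : ℕ :=
  Nat.card {x : Fin l × ℕ // lam x.1 x.2 = k ∧ colour n v x.1 x.2 1 = r}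

/-- The total number of length-`k` rows of `λ`. -/
noncomputable def rowCount {l : ℕ} (lam : Fin l → ℕ → ℕ) (k : ℕ) : ℕ :=
  Nat.card {x : Fin l × ℕ // lam x.1 x.2 = k}

/-- `m_r(k)`: the number of `r`-nodes of `λ` in column `k` or to its right. -/
noncomputable def mCount (n : ℕ) {l : ℕ} (v : Fin l → ℕ) (lam : Fin l → ℕ → ℕ)
    (k : ℕ) (r : ZMod n) : ℕ :=
  Nat.card {x : Fin l × ℕ × ℕ //
    k ≤ x.2.2 ∧ x.2.2 ≤ lam x.1 x.2.1 ∧ colour n v x.1 x.2.1 x.2.2 = r}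

/-- `p` is a `(Λ′,Λ″)`-restricted path, where `l''` is the level of `Λ″`:
`p - Λ′ ∈ 𝒫(Λ″)` and `p_k - η̂_k` is dominant for all `k`. -/
def IsRes (n : ℕ) [NeZero n] (l'' : ℕ) (L' L'' : ZMod n → ℤ) (p : ℕ → ZMod n → ℤ) : Prop :=
  IsPath n l'' L'' (fun k i => p k i - L' i) ∧
  ∀ k, ∃ e : ZMod n → ℕ, (∑ i, e i) = l'' ∧
    (fun i => p (k + 1) i - p k i) = stepWt n e ∧ ∀ i, (e i : ℤ) ≤ p k i

/-- The length of a restricted path: `ℓ(p) = ℓ(p - Λ′)`. -/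
noncomputable def resLen (n : ℕ) (L' L'' : ZMod n → ℤ) (p : ℕ → ZMod n → ℤ) : ℕ :=
  sInf {K | ∀ k ≥ K, (fun i => p k i - L' i) = gsp n L'' k}

/-- `♯Λ`. -/
def sharpWt (n : ℕ) (Λ : ZMod n → ℤ) : ZMod n → ℤ := fun i => Λ (-i)

/-- `♯p`: `(♯p)_k (i) = a_{k-i}(k)` where `p_k = ∑ a_i(k) Λ_i`. -/
def sharpPath (n : ℕ) (p : ℕ → ZMod n → ℤ) : ℕ → ZMod n → ℤ :=
  fun k i => p k ((k : ZMod n) - i)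

/-- `θ(a) = 1` if `a ≥ 0`, `0` otherwise. -/
def theta (a : ℤ) : ℕ := if 0 ≤ a then 1 else 0

/-- The function counting the entries of `μ : Fin l → ℕ` in each class mod `n`. -/
def cntF (n : ℕ) {l : ℕ} (μ : Fin l → ℕ) : ZMod n → ℕ :=
  fun i => (Finset.univ.filter fun j : Fin l => ((μ j : ZMod n) = i)).card

/-- The energy function `H` on `A_l^+ × A_l^+`:
`H(α,β) = min_{σ ∈ S_l} ∑_j θ(μ_j - ν_{σ(j)})` where `α`, `β` are the step weights of
`Λ_{μ_0} + ⋯ + Λ_{μ_{l-1}}`, `Λ_{ν_0} + ⋯ + Λ_{ν_{l-1}}` with `0 ≤ μ_j, ν_j < n`. -/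
noncomputable def Hfun (n : ℕ) (l : ℕ) (d d' : ZMod n → ℤ) : ℕ :=
  sInf {m | ∃ μ ν : Fin l → ℕ, (∀ j, μ j < n) ∧ (∀ j, ν j < n) ∧
    d = stepWt n (cntF n μ) ∧ d' = stepWt n (cntF n ν) ∧
    m = Finset.univ.inf' ⟨1, Finset.mem_univ 1⟩
      fun σ : Equiv.Perm (Fin l) => ∑ j, theta ((μ j : ℤ) - (ν (σ j) : ℤ))}

/-- `(j, i)` is a removable `r`-node of `λ` (node at the right end of 0-based row `i`
of component `j`). -/
def RemNode (n : ℕ) {l : ℕ} (v : Fin l → ℕ) (lam : Fin l → ℕ → ℕ) (r : ZMod n)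
    (j : Fin l) (i : ℕ) : Prop :=
  1 ≤ lam j i ∧ lam j (i + 1) < lam j i ∧ colour n v j i (lam j i) = r

/-- `(j, i)` is an addable `r`-node of `λ` (node addable at the end of 0-based row `i`
of component `j`). -/
def AddNode (n : ℕ) {l : ℕ} (v : Fin l → ℕ) (lam : Fin l → ℕ → ℕ) (r : ZMod n)
    (j : Fin l) (i : ℕ) : Prop :=
  (i = 0 ∨ lam j i < lam j (i - 1)) ∧ colour n v j i (lam j i + 1) = r

/-- The diagonal number `d = c - (i+1) + v j` of the addable/removable node
`x = (j, i, isRemovable)`. -/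
def nodeD {l : ℕ} (v : Fin l → ℕ) (lam : Fin l → ℕ → ℕ) (x : Fin l × ℕ × Bool) : ℤ :=
  (if x.2.2 then (lam x.1 x.2.1 : ℤ) else (lam x.1 x.2.1 : ℤ) + 1) - ((x.2.1 : ℤ) + 1) + (v x.1 : ℤ)

/-- The total order on addable/removable nodes: `(d,j) < (d',j')` iff `d < d'`, or
`d = d'` and `j > j'`. -/
def nodeLT {l : ℕ} (v : Fin l → ℕ) (lam : Fin l → ℕ → ℕ) (x y : Fin l × ℕ × Bool) : Prop :=
  nodeD v lam x < nodeD v lam y ∨ (nodeD v lam x = nodeD v lam y ∧ (y.1 : ℕ) < (x.1 : ℕ))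

/-- `L` is the `r`-signature of `λ`: the increasing list of all addable and removable
`r`-nodes (flag `true` = removable, `false` = addable). -/
def IsSig (n : ℕ) {l : ℕ} (v : Fin l → ℕ) (lam : Fin l → ℕ → ℕ) (r : ZMod n)
    (L : List (Fin l × ℕ × Bool)) : Prop :=
  L.Pairwise (nodeLT v lam) ∧
  ∀ x : Fin l × ℕ × Bool, x ∈ L ↔
    ((x.2.2 = true ∧ RemNode n v lam r x.1 x.2.1) ∨
      (x.2.2 = false ∧ AddNode n v lam r x.1 x.2.1))

/-- One step of the reduction procedure on signature words: delete an adjacent pair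
consisting of a removable node (`true`) immediately followed by an addable node (`false`). -/
inductive SigStep : List Bool → List Bool → Prop
  | pair (l₁ l₂ : List Bool) : SigStep (l₁ ++ true :: false :: l₂) (l₁ ++ l₂)


section Aux

lemma part_anti {f : ℕ → ℕ} (hf : IsPartitionF f) : ∀ {i j : ℕ}, i ≤ j → f j ≤ f i := by
  intro i j h
  induction j with
  | zero => interval_cases i; exact le_rfl
  | succ m ih =>
    rcases Nat.lt_or_ge i (m+1) with h' | h'
    · exact le_trans (hf.1 m) (ih (Nat.lt_succ_iff.mp h'))
    · have : i = m + 1 := le_antisymm h h'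
      simp [this]

lemma colHt_lt_iff {f : ℕ → ℕ} (hf : IsPartitionF f) {m : ℕ} (hm : 1 ≤ m) (i : ℕ) :
    i < colHt f m ↔ m ≤ f i := by
  obtain ⟨N, hN⟩ := hf.2
  have hex : ∃ i, f i < m := ⟨N, by rw [hN N le_rfl]; exact hm⟩
  have key : ∀ i, m ≤ f i ↔ i < Nat.find hex := by
    intro i
    constructor
    · intro h
      by_contra hc
      push_neg at hc
      have h1 := part_anti hf hc
      have h2 := Nat.find_spec hex
      omega
    · intro h
      have := Nat.find_min hex h
      omega
  have hcard : colHt f m = Nat.find hex := by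
    unfold colHt
    rw [Nat.card_congr (Equiv.subtypeEquivRight (q := fun i => i < Nat.find hex) key)]
    rw [Nat.card_congr (Fin.equivSubtype).symm, Nat.card_eq_fintype_card, Fintype.card_fin]
  rw [hcard, key i]

lemma part_eq_iff {f : ℕ → ℕ} (hf : IsPartitionF f) (k i : ℕ) :
    f i = k + 1 ↔ colHt f (k+2) ≤ i ∧ i < colHt f (k+1) := by
  have h1 := colHt_lt_iff hf (m := k+1) (by omega) i
  have h2 := colHt_lt_iff hf (m := k+2) (by omega) i
  omega

lemma colHt_mono {f : ℕ → ℕ} (hf : IsPartitionF f) {m m' : ℕ} (h1 : 1 ≤ m) (h : m ≤ m') :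
    colHt f m' ≤ colHt f m := by
  by_contra hc
  push_neg at hc
  have h2 := (colHt_lt_iff hf (le_trans h1 h) (colHt f m)).mp hc
  have h3 := colHt_lt_iff hf h1 (colHt f m)
  omega

lemma colHt_eq_zero {f : ℕ → ℕ} (hf : IsPartitionF f) {m : ℕ} (hm : f 0 < m) :
    colHt f m = 0 := by
  by_contra hc
  have h1 : 0 < colHt f m := Nat.pos_of_ne_zero hc
  have h2 := (colHt_lt_iff hf (by omega) 0).mp h1
  have := part_anti hf (Nat.zero_le 0)
  omega

end Aux
section Cnt

/-- count of `i < H` with `i ≡ c mod n`. -/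
def cnt (n H : ℕ) (c : ZMod n) : ℕ :=
  ((Finset.range H).filter fun i : ℕ => ((i : ZMod n) = c)).card

lemma cnt_succ (n H : ℕ) (c : ZMod n) :
    cnt n (H+1) c = cnt n H c + (if ((H : ZMod n) = c) then 1 else 0) := by
  unfold cnt
  rw [Finset.range_add_one, Finset.filter_insert]
  split_ifs with h
  · rw [Finset.card_insert_of_notMem (by simp [Finset.mem_filter])]
  · simp

lemma cnt_diff (n H : ℕ) (c : ZMod n) :
    (cnt n H c : ℤ) - cnt n H (c+1) =
      (if ((H : ZMod n) = c + 1) then 1 else 0) -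
      (if ((0 : ZMod n) = c + 1) then 1 else 0) := by
  induction H with
  | zero => simp [cnt]
  | succ H ih =>
    rw [cnt_succ, cnt_succ]
    have e1 : (((H+1 : ℕ)) : ZMod n) = c + 1 ↔ ((H : ℕ) : ZMod n) = c := by
      push_cast
      constructor
      · intro h; exact add_right_cancel h
      · intro h; rw [h]
    push_cast
    simp only [add_left_inj]
    split_ifs at ih ⊢ <;> omega

lemma cnt_split (n a b : ℕ) (h : a ≤ b) (c : ZMod n) :
    cnt n b c = cnt n a c +
      ((Finset.Ico a b).filter fun i : ℕ => ((i : ZMod n) = c)).card := by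
  unfold cnt
  rw [Finset.range_eq_Ico, ← Finset.Ico_union_Ico_eq_Ico (Nat.zero_le a) h,
      Finset.filter_union,
      Finset.card_union_of_disjoint
        (Finset.disjoint_filter_filter (Finset.Ico_disjoint_Ico_consecutive 0 a b)),
      ← Finset.range_eq_Ico]

lemma cntIco_diff (n a b : ℕ) (h : a ≤ b) (c : ZMod n) :
    (((Finset.Ico a b).filter fun i : ℕ => ((i : ZMod n) = c)).card : ℤ) -
      ((Finset.Ico a b).filter fun i : ℕ => ((i : ZMod n) = c + 1)).card =
      (if ((b : ZMod n) = c + 1) then 1 else 0) -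
      (if ((a : ZMod n) = c + 1) then 1 else 0) := by
  have h1 := cnt_split n a b h c
  have h2 := cnt_split n a b h (c+1)
  have d1 := cnt_diff n b c
  have d2 := cnt_diff n a c
  split_ifs at d1 d2 ⊢ <;> omega

end Cnt
section Bridge

lemma natCard_filter_range {P : ℕ → Prop} [DecidablePred P] {R : ℕ}
    (hR : ∀ i, P i → i < R) :
    Nat.card {i : ℕ // P i} = ((Finset.range R).filter fun i => P i).card := by
  rw [Nat.card_congr (Equiv.subtypeEquivRight
      (q := fun i => i ∈ (Finset.range R).filter fun i => P i)
      (fun i => by simp only [Finset.mem_filter, Finset.mem_range]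
                   exact ⟨fun h => ⟨hR i h, h⟩, fun h => h.2⟩))]
  rw [Nat.card_eq_fintype_card, Fintype.card_coe]

lemma natCard_fin_one {P : Fin 1 → Prop} [∀ j, Decidable (P j)] :
    Nat.card {j : Fin 1 // P j} = if P 0 then 1 else 0 := by
  have h : ∀ j : Fin 1, P j ↔ P 0 := fun j => by rw [Subsingleton.elim j 0]
  rw [Nat.card_congr (Equiv.subtypeEquivRight h)]
  split_ifs with h0
  · rw [Nat.card_congr (Equiv.subtypeUnivEquiv fun _ => h0)]; simp
  · have : IsEmpty {_j : Fin 1 // P 0} := ⟨fun x => h0 x.2⟩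
    simp

lemma natCard_pair_split {l : ℕ} (P : Fin l × ℕ → Prop) [DecidablePred P] {R : ℕ}
    (hR : ∀ x, P x → x.2 < R) :
    Nat.card {x : Fin l × ℕ // P x} = ∑ j : Fin l, Nat.card {i : ℕ // P (j, i)} := by
  have e : ∀ x : Fin l × ℕ, P x ↔ x ∈ (Finset.univ ×ˢ Finset.range R).filter fun x => P x := by
    intro x
    simp only [Finset.mem_filter, Finset.mem_product, Finset.mem_univ, Finset.mem_range,
      true_and]
    exact ⟨fun h => ⟨hR x h, h⟩, fun h => h.2⟩
  rw [Nat.card_congr (Equiv.subtypeEquivRight e), Nat.card_eq_fintype_card, Fintype.card_coe]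
  rw [Finset.card_eq_sum_card_fiberwise (f := fun x => x.1) (t := Finset.univ)
      (fun x _ => Finset.mem_univ x.1)]
  refine Finset.sum_congr rfl fun j _ => ?_
  rw [natCard_filter_range (R := R) (fun i h => hR (j, i) h)]
  refine Finset.card_nbij' (fun x => x.2) (fun i => (j, i)) ?_ ?_ ?_ ?_
  · intro x hx
    rw [Finset.mem_coe, Finset.mem_filter] at hx
    rw [Finset.mem_filter] at hx
    obtain ⟨⟨_, hP⟩, hj1⟩ := hx
    rw [Finset.mem_coe, Finset.mem_filter, Finset.mem_range]
    have hP2 : P (x.1, x.2) := hP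
    rw [hj1] at hP2
    exact ⟨hR _ hP, hP2⟩
  · intro i hi
    rw [Finset.mem_coe, Finset.mem_filter, Finset.mem_range] at hi
    rw [Finset.mem_coe, Finset.mem_filter, Finset.mem_filter, Finset.mem_product]
    exact ⟨⟨⟨Finset.mem_univ _, Finset.mem_range.mpr hi.1⟩, hi.2⟩, rfl⟩
  · intro x hx
    rw [Finset.mem_coe, Finset.mem_filter] at hx
    show (j, x.2) = x
    rw [← hx.2]
  · intro i _
    rfl

end Bridge
section Convert

lemma zmod_flip {n : ℕ} (a b : ZMod n) : a = b ↔ b = a := eq_comm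

lemma leftCount_eq (n : ℕ) [NeZero n] (vu : ℕ) (mu : Fin 1 → ℕ → ℕ)
    (hmu : IsMP 1 mu) (k : ℕ) (r : ZMod n) :
    leftCount n (fun _ : Fin 1 => vu) mu (k+1) r =
      ((Finset.Ico (colHt (mu 0) (k+2)) (colHt (mu 0) (k+1))).filter
        fun i : ℕ => ((i : ZMod n) = (vu : ZMod n) - r)).card := by
  unfold leftCount
  rw [natCard_pair_split _ (R := colHt (mu 0) (k+1))
      (fun x hx => by
        have h0 : x.1 = 0 := Subsingleton.elim _ _
        have := (part_eq_iff (hmu 0) k x.2).mp (by rw [← h0]; exact hx.1)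
        exact this.2)]
  rw [Fin.sum_univ_one]
  rw [natCard_filter_range (R := colHt (mu 0) (k+1))
      (fun i hi => ((part_eq_iff (hmu 0) k i).mp hi.1).2)]
  congr 1
  ext i
  simp only [Finset.mem_filter, Finset.mem_range, Finset.mem_Ico]
  rw [part_eq_iff (hmu 0) k i]
  unfold colour
  constructor
  · rintro ⟨hi, ⟨h2, h1⟩, hc⟩
    refine ⟨⟨h2, h1⟩, ?_⟩
    push_cast at hc ⊢
    linear_combination -hc
  · rintro ⟨⟨h2, h1⟩, hc⟩
    refine ⟨h1, ⟨⟨h2, h1⟩, ?_⟩⟩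
    push_cast at hc ⊢
    linear_combination -hc

lemma psiCount_eq (n : ℕ) [NeZero n] {l : ℕ} (v : Fin l → ℕ) (lam : Fin l → ℕ → ℕ)
    (hlam : IsMP l lam) (k : ℕ) (s : ZMod n) :
    psiCount n v lam (k+1) s =
      ∑ j : Fin l, ((Finset.Ico (colHt (lam j) (k+2)) (colHt (lam j) (k+1))).filter
        fun i : ℕ => ((i : ZMod n) = (k : ZMod n) + (v j : ZMod n) - s)).card := by
  unfold psiCount
  rw [natCard_pair_split _ (R := (Finset.univ.sup fun j => colHt (lam j) (k+1)) + 1)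
      (fun x hx => by
        have h := ((part_eq_iff (hlam x.1) k x.2).mp hx.1).2
        have h2 : colHt (lam x.1) (k+1) ≤ Finset.univ.sup fun j => colHt (lam j) (k+1) :=
          Finset.le_sup (f := fun j => colHt (lam j) (k+1)) (Finset.mem_univ x.1)
        omega)]
  refine Finset.sum_congr rfl fun j _ => ?_
  rw [natCard_filter_range (R := (Finset.univ.sup fun j => colHt (lam j) (k+1)) + 1)
      (fun i hi => by
        have h := ((part_eq_iff (hlam j) k i).mp hi.1).2
        have h2 : colHt (lam j) (k+1) ≤ Finset.univ.sup fun j => colHt (lam j) (k+1) :=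
          Finset.le_sup (f := fun j => colHt (lam j) (k+1)) (Finset.mem_univ j)
        omega)]
  congr 1
  ext i
  simp only [Finset.mem_filter, Finset.mem_range, Finset.mem_Ico]
  rw [part_eq_iff (hlam j) k i]
  unfold colour
  constructor
  · rintro ⟨hi, ⟨h2, h1⟩, hc⟩
    refine ⟨⟨h2, h1⟩, ?_⟩
    push_cast at hc ⊢
    linear_combination -hc
  · rintro ⟨⟨h2, h1⟩, hc⟩
    have h3 : colHt (lam j) (k+1) ≤ Finset.univ.sup fun j => colHt (lam j) (k+1) :=
      Finset.le_sup (f := fun j => colHt (lam j) (k+1)) (Finset.mem_univ j)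
    refine ⟨by omega, ⟨⟨h2, h1⟩, ?_⟩⟩
    push_cast at hc ⊢
    linear_combination -hc

end Convert
section Smatch

lemma smatch (n : ℕ) [NeZero n] {l : ℕ} (v : Fin l → ℕ) (lam : Fin l → ℕ → ℕ)
    (hlam : IsMP l lam) (vu : ℕ) (mu : Fin 1 → ℕ → ℕ) (hmu : IsMP 1 mu)
    (hmatch : ∀ k : ℕ, 0 < k → ∀ r : ZMod n,
      leftCount n (fun _ : Fin 1 => vu) mu k r = psiCount n v lam k (-r))
    (k : ℕ) (i : ZMod n) :
    (if i = (vu : ZMod n) + (k : ZMod n) + 1 - (colHt (mu 0) (k+1) : ZMod n) then (1:ℤ) else 0)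
      - (if i = (vu : ZMod n) + (k : ZMod n) + 1 - (colHt (mu 0) (k+2) : ZMod n) then 1 else 0)
    = ∑ j : Fin l,
        ((if i = ((colHt (lam j) (k+2) : ℕ) : ZMod n) - (v j : ZMod n) then (1:ℤ) else 0)
          - (if i = ((colHt (lam j) (k+1) : ℕ) : ZMod n) - (v j : ZMod n) then 1 else 0)) := by
  classical
  set r : ZMod n := i - (k : ZMod n) with hr
  have hpos : 0 < k + 1 := Nat.succ_pos k
  have A := hmatch (k+1) hpos r
  have B := hmatch (k+1) hpos (r-1)
  rw [leftCount_eq n vu mu hmu, psiCount_eq n v lam hlam] at A B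
  -- abbreviations
  set c1 := colHt (mu 0) (k+1) with hc1
  set c2 := colHt (mu 0) (k+2) with hc2
  have hc : c2 ≤ c1 := colHt_mono (hmu 0) (by omega) (by omega)
  -- the mu-side difference
  have hmuDiff := cntIco_diff n c2 c1 hc ((vu : ZMod n) - r)
  -- normalize the class in B's left side
  have eBmu : (vu : ZMod n) - (r-1) = ((vu : ZMod n) - r) + 1 := by ring
  rw [show ((vu : ZMod n) - (r-1)) = ((vu : ZMod n) - r) + 1 from eBmu] at B
  -- per-component lambda-side differences
  have perj : ∀ j : Fin l,
      ((((Finset.Ico (colHt (lam j) (k+2)) (colHt (lam j) (k+1))).filter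
          fun x : ℕ => ((x : ZMod n) = (k : ZMod n) + (v j : ZMod n) - -r)).card : ℤ)
        - ((Finset.Ico (colHt (lam j) (k+2)) (colHt (lam j) (k+1))).filter
          fun x : ℕ => ((x : ZMod n) = (k : ZMod n) + (v j : ZMod n) - -(r-1))).card)
      = (if i = ((colHt (lam j) (k+2) : ℕ) : ZMod n) - (v j : ZMod n) then (1:ℤ) else 0)
        - (if i = ((colHt (lam j) (k+1) : ℕ) : ZMod n) - (v j : ZMod n) then 1 else 0) := by
    intro j
    have hcj : colHt (lam j) (k+2) ≤ colHt (lam j) (k+1) :=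
      colHt_mono (hlam j) (by omega) (by omega)
    have hdiff := cntIco_diff n _ _ hcj ((k : ZMod n) + (v j : ZMod n) + (r-1))
    have e2 : (k : ZMod n) + (v j : ZMod n) - -r
        = ((k : ZMod n) + (v j : ZMod n) + (r-1)) + 1 := by ring
    have e3 : (k : ZMod n) + (v j : ZMod n) - -(r-1)
        = (k : ZMod n) + (v j : ZMod n) + (r-1) := by ring
    simp only [e2, e3]
    have e4 : (((colHt (lam j) (k+2) : ℕ) : ZMod n)
        = (k : ZMod n) + (v j : ZMod n) + (r-1) + 1)
        = (i = ((colHt (lam j) (k+2) : ℕ) : ZMod n) - (v j : ZMod n)) := by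
      apply propext
      constructor
      · intro h
        first
        | linear_combination h
        | linear_combination -h
        | linear_combination h + hr
        | linear_combination h - hr
        | linear_combination -h + hr
        | linear_combination -h - hr
      · intro h
        first
        | linear_combination h
        | linear_combination -h
        | linear_combination h + hr
        | linear_combination h - hr
        | linear_combination -h + hr
        | linear_combination -h - hr
    have e5 : (((colHt (lam j) (k+1) : ℕ) : ZMod n)
        = (k : ZMod n) + (v j : ZMod n) + (r-1) + 1)
        = (i = ((colHt (lam j) (k+1) : ℕ) : ZMod n) - (v j : ZMod n)) := by
      apply propext
      constructor
      · intro h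
        first
        | linear_combination h
        | linear_combination -h
        | linear_combination h + hr
        | linear_combination h - hr
        | linear_combination -h + hr
        | linear_combination -h - hr
      · intro h
        first
        | linear_combination h
        | linear_combination -h
        | linear_combination h + hr
        | linear_combination h - hr
        | linear_combination -h + hr
        | linear_combination -h - hr
    simp only [e4, e5] at hdiff
    linarith [hdiff]
  -- convert the mu-side conditions
  have e6 : ((c1 : ZMod n) = (vu : ZMod n) - r + 1)
      = (i = (vu : ZMod n) + (k : ZMod n) + 1 - (c1 : ZMod n)) := by
    apply propext
    constructor
    · intro h
      first
      | linear_combination h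
      | linear_combination -h
      | linear_combination h + hr
      | linear_combination h - hr
      | linear_combination -h + hr
      | linear_combination -h - hr
    · intro h
      first
      | linear_combination h
      | linear_combination -h
      | linear_combination h + hr
      | linear_combination h - hr
      | linear_combination -h + hr
      | linear_combination -h - hr
  have e7 : ((c2 : ZMod n) = (vu : ZMod n) - r + 1)
      = (i = (vu : ZMod n) + (k : ZMod n) + 1 - (c2 : ZMod n)) := by
    apply propext
    constructor
    · intro h
      first
      | linear_combination h
      | linear_combination -h
      | linear_combination h + hr
      | linear_combination h - hr
      | linear_combination -h + hr
      | linear_combination -h - hr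
    · intro h
      first
      | linear_combination h
      | linear_combination -h
      | linear_combination h + hr
      | linear_combination h - hr
      | linear_combination -h + hr
      | linear_combination -h - hr
  simp only [e6, e7] at hmuDiff
  -- assemble
  have hsum : ∑ j : Fin l,
      ((((Finset.Ico (colHt (lam j) (k+2)) (colHt (lam j) (k+1))).filter
          fun x : ℕ => ((x : ZMod n) = (k : ZMod n) + (v j : ZMod n) - -r)).card : ℤ)
        - ((Finset.Ico (colHt (lam j) (k+2)) (colHt (lam j) (k+1))).filter
          fun x : ℕ => ((x : ZMod n) = (k : ZMod n) + (v j : ZMod n) - -(r-1))).card)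
      = ∑ j : Fin l,
        ((if i = ((colHt (lam j) (k+2) : ℕ) : ZMod n) - (v j : ZMod n) then (1:ℤ) else 0)
          - (if i = ((colHt (lam j) (k+1) : ℕ) : ZMod n) - (v j : ZMod n) then 1 else 0)) :=
    Finset.sum_congr rfl fun j _ => perj j
  have hA : ((((Finset.Ico c2 c1).filter
      fun x : ℕ => ((x : ZMod n) = (vu : ZMod n) - r)).card : ℤ))
      = ∑ j : Fin l, (((Finset.Ico (colHt (lam j) (k+2)) (colHt (lam j) (k+1))).filter
          fun x : ℕ => ((x : ZMod n) = (k : ZMod n) + (v j : ZMod n) - -r)).card : ℤ) := by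
    exact_mod_cast congrArg (Nat.cast : ℕ → ℤ) A
  have hB : ((((Finset.Ico c2 c1).filter
      fun x : ℕ => ((x : ZMod n) = (vu : ZMod n) - r + 1)).card : ℤ))
      = ∑ j : Fin l, (((Finset.Ico (colHt (lam j) (k+2)) (colHt (lam j) (k+1))).filter
          fun x : ℕ => ((x : ZMod n) = (k : ZMod n) + (v j : ZMod n) - -(r-1))).card : ℤ) := by
    exact_mod_cast congrArg (Nat.cast : ℕ → ℤ) B
  rw [← hmuDiff, hA, hB, ← Finset.sum_sub_distrib]
  exact hsum

end Smatch
section Master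

lemma eFun_one (n : ℕ) [NeZero n] (vu : ℕ) (mu : Fin 1 → ℕ → ℕ) (k : ℕ) (c : ZMod n) :
    eFun n (fun _ : Fin 1 => vu) mu k c =
      if ((vu : ZMod n) + (k : ZMod n) - (colHt (mu 0) (k+1) : ZMod n) = c) then 1 else 0 := by
  unfold eFun
  exact natCard_fin_one

lemma wtOf_one (n : ℕ) (vu : ℕ) (x : ZMod n) :
    wtOf n (fun _ : Fin 1 => vu) x = if ((vu : ZMod n) = x) then 1 else 0 := by
  unfold wtOf
  rw [Finset.filter_const]
  split_ifs <;> simp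

lemma sharpWt_eval (n : ℕ) {l : ℕ} (v : Fin l → ℕ) (x : ZMod n) :
    sharpWt n (wtOf n v) x = ∑ j : Fin l, (if ((v j : ZMod n) = -x) then (1:ℤ) else 0) := by
  unfold sharpWt wtOf
  rw [Finset.card_filter]
  push_cast
  rfl

lemma master (n : ℕ) [NeZero n] {l : ℕ} (v : Fin l → ℕ) (lam : Fin l → ℕ → ℕ)
    (hlam : IsMP l lam) (u : ℕ) (mu : Fin 1 → ℕ → ℕ) (hmu : IsMP 1 mu)
    (q : ℕ → ZMod n → ℤ)
    (hstep : ∀ k, (fun i => q (k + 1) i - q k i) =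
      stepWt n (eFun n (fun _ : Fin 1 => (n - u) % n) mu k))
    (K0 : ℕ) (htail : ∀ k ≥ K0, q k = gsp n (wtOf n (fun _ : Fin 1 => (n - u) % n)) k)
    (hmatch : ∀ k : ℕ, 0 < k → ∀ r : ZMod n,
      leftCount n (fun _ : Fin 1 => (n - u) % n) mu k r = psiCount n v lam k (-r)) :
    ∀ k (i : ZMod n), q k i + sharpWt n (wtOf n v) i =
      (if i = ((((n - u) % n : ℕ) : ZMod n) + (k : ZMod n)
          - (colHt (mu 0) (k+1) : ZMod n)) then (1:ℤ) else 0)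
      + ∑ j : Fin l,
          (if i = ((colHt (lam j) (k+1) : ℕ) : ZMod n) - (v j : ZMod n) then (1:ℤ) else 0) := by
  classical
  set vu : ℕ := (n - u) % n with hvu
  set K : ℕ := max K0 (max (mu 0 0) (Finset.univ.sup fun j => lam j 0)) with hK
  -- base case
  have base : ∀ k, K ≤ k → ∀ i : ZMod n, q k i + sharpWt n (wtOf n v) i =
      (if i = ((vu : ZMod n) + (k : ZMod n) - (colHt (mu 0) (k+1) : ZMod n)) then (1:ℤ) else 0)
      + ∑ j : Fin l,
          (if i = ((colHt (lam j) (k+1) : ℕ) : ZMod n) - (v j : ZMod n) then (1:ℤ) else 0) := by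
    intro k hk i
    have hq : q k i = gsp n (wtOf n (fun _ : Fin 1 => vu)) k i := by
      rw [htail k (le_trans (le_max_left _ _) hk)]
    have hmu0 : colHt (mu 0) (k+1) = 0 :=
      colHt_eq_zero (hmu 0) (by
        have := le_trans (le_trans (le_max_left _ _) (le_max_right K0 _)) hk
        omega)
    have hlam0 : ∀ j : Fin l, colHt (lam j) (k+1) = 0 := by
      intro j
      refine colHt_eq_zero (hlam j) ?_
      have h1 : lam j 0 ≤ Finset.univ.sup fun j => lam j 0 :=
        Finset.le_sup (f := fun j => lam j 0) (Finset.mem_univ j)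
      have h2 := le_trans (le_trans (le_max_right _ _) (le_max_right K0 _)) hk
      omega
    rw [hq, hmu0]
    unfold gsp
    rw [wtOf_one, sharpWt_eval]
    have e1 : ((vu : ZMod n) = i - (k : ZMod n)) = (i = (vu : ZMod n) + (k : ZMod n)
        - ((0:ℕ) : ZMod n)) := by
      apply propext
      push_cast
      constructor
      · intro h; linear_combination -h
      · intro h; linear_combination -h
    simp only [e1]
    congr 1
    refine Finset.sum_congr rfl fun j _ => ?_
    rw [hlam0 j]
    have e2 : (((v j : ℕ) : ZMod n) = -i) = (i = (((0:ℕ) : ℕ) : ZMod n) - (v j : ZMod n)) := by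
      apply propext
      push_cast
      constructor
      · intro h
        first
        | linear_combination h
        | linear_combination -h
      · intro h
        first
        | linear_combination h
        | linear_combination -h
    simp only [e2]
  -- downward induction
  have main : ∀ d k, K ≤ k + d → ∀ i : ZMod n, q k i + sharpWt n (wtOf n v) i =
      (if i = ((vu : ZMod n) + (k : ZMod n) - (colHt (mu 0) (k+1) : ZMod n)) then (1:ℤ) else 0)
      + ∑ j : Fin l,
          (if i = ((colHt (lam j) (k+1) : ℕ) : ZMod n) - (v j : ZMod n) then (1:ℤ) else 0) := by
    intro d
    induction d with
    | zero => intro k hk; exact base k (by omega)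
    | succ d ih =>
      intro k hk i
      have IH1 := ih (k+1) (by omega) i
      -- step relation
      have hs := congrFun (hstep k) i
      simp only [stepWt] at hs
      rw [eFun_one n vu mu k (i - 1), eFun_one n vu mu k i] at hs
      have e0 : (((vu : ZMod n) + (k : ZMod n) - (colHt (mu 0) (k+1) : ZMod n)) = i - 1)
          = (i = (vu : ZMod n) + (k : ZMod n) + 1 - (colHt (mu 0) (k+1) : ZMod n)) := by
        apply propext
        constructor
        · intro h; linear_combination -h
        · intro h; linear_combination -h
      have e0' : (((vu : ZMod n) + (k : ZMod n) - (colHt (mu 0) (k+1) : ZMod n)) = i)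
          = (i = (vu : ZMod n) + (k : ZMod n) - (colHt (mu 0) (k+1) : ZMod n)) := by
        apply propext; exact eq_comm
      simp only [e0, e0'] at hs
      -- IH at k+1 with cast normalization
      have ecast : (((k+1 : ℕ) : ZMod n)) = (k : ZMod n) + 1 := by push_cast; ring
      rw [ecast] at IH1
      have ecast2 : ((vu : ZMod n) + ((k : ZMod n) + 1) - (colHt (mu 0) (k+1+1) : ZMod n))
          = ((vu : ZMod n) + (k : ZMod n) + 1 - (colHt (mu 0) (k+2) : ZMod n)) := by
        norm_num
        ring
      rw [ecast2] at IH1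
      have S := smatch n v lam hlam vu mu hmu hmatch k i
      rw [Finset.sum_sub_distrib] at S
      have hsum_eq : (∑ j : Fin l, (if i = ((colHt (lam j) (k+1+1) : ℕ) : ZMod n)
          - (v j : ZMod n) then (1:ℤ) else 0))
          = ∑ j : Fin l, (if i = ((colHt (lam j) (k+2) : ℕ) : ZMod n)
          - (v j : ZMod n) then (1:ℤ) else 0) := by norm_num
      rw [hsum_eq] at IH1
      simp only [Nat.cast_ite, Nat.cast_one, Nat.cast_zero] at hs
      linarith [IH1, hs, S]
  intro k i
  exact main (K - k) k (by omega) i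

end Master
/-- under the hypotheses of Statement 13, the path `π(λ̲) + ♯Λ` is
`(♯Λ, Λ_{-u})`-restricted; equivalently `λ̲ ∈ 𝒴(♯Λ, Λ_{-u})`. -/
theorem underline_restricted (n : ℕ) [NeZero n] (hn : 2 ≤ n) (l : ℕ)
    (v : Fin l → ℕ) (hv : SortedV n l v) (u : ℕ) (hu : u < n)
    (lam : Fin l → ℕ → ℕ) (p : ℕ → ZMod n → ℤ) (hHL : IsHL n v lam p)
    (mu : Fin 1 → ℕ → ℕ)
    (hmud : ∀ k : ℕ, 0 < k →
      Nat.card {i : ℕ // mu 0 i = k} = Nat.card {x : Fin l × ℕ // lam x.1 x.2 = k})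
    (q : ℕ → ZMod n → ℤ)
    (hq : IsHL n (fun _ : Fin 1 => (n - u) % n) mu q)
    (hmatch : ∀ k : ℕ, 0 < k → ∀ r : ZMod n,
      leftCount n (fun _ : Fin 1 => (n - u) % n) mu k r = psiCount n v lam k (-r)) :
    IsRes n 1 (sharpWt n (wtOf n v)) (wtOf n (fun _ : Fin 1 => (n - u) % n))
      (fun k i => q k i + sharpWt n (wtOf n v) i) := by
  classical
  obtain ⟨hmuMP, -, ⟨hstep, K0, htail⟩, -⟩ := hq
  obtain ⟨hlamMP, -, -, -⟩ := hHL
  have M := master n v lam hlamMP u mu hmuMP q hstep K0 htail hmatch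
  have hsum1 : ∀ k : ℕ, (∑ i : ZMod n, eFun n (fun _ : Fin 1 => (n - u) % n) mu k i) = 1 := by
    intro k
    simp only [eFun_one]
    rw [Finset.sum_ite_eq]
    simp
  have hstep' : ∀ k : ℕ,
      (fun i : ZMod n => (q (k+1) i + sharpWt n (wtOf n v) i)
        - (q k i + sharpWt n (wtOf n v) i)) =
      stepWt n (eFun n (fun _ : Fin 1 => (n - u) % n) mu k) := by
    intro k
    funext i
    have := congrFun (hstep k) i
    linear_combination this
  constructor
  · constructor
    · intro k
      refine ⟨eFun n (fun _ : Fin 1 => (n - u) % n) mu k, hsum1 k, ?_⟩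
      funext i
      simp only
      linear_combination congrFun (hstep k) i
    · refine ⟨K0, fun k hk => ?_⟩
      funext i
      simp only
      rw [add_sub_cancel_right]
      exact congrFun (htail k hk) i
  · intro k
    refine ⟨eFun n (fun _ : Fin 1 => (n - u) % n) mu k, hsum1 k, hstep' k, ?_⟩
    intro i
    simp only
    rw [eFun_one, M k i]
    have hnn : (0:ℤ) ≤ ∑ j : Fin l,
        (if i = ((colHt (lam j) (k+1) : ℕ) : ZMod n) - (v j : ZMod n) then (1:ℤ) else 0) :=
      Finset.sum_nonneg fun j _ => by split_ifs <;> norm_num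
    have ec : ((((n - u) % n : ℕ) : ZMod n) + (k : ZMod n) - (colHt (mu 0) (k+1) : ZMod n) = i)
        = (i = (((n - u) % n : ℕ) : ZMod n) + (k : ZMod n) - (colHt (mu 0) (k+1) : ZMod n)) := by
      apply propext; exact eq_comm
    simp only [ec]
    split_ifs with h
    · push_cast
      linarith
    · push_cast
      linarith

end BF
end

section
/- Let Λ ∈ P_l^+ and p ∈ 𝒫(Λ). Then there exist l′ ∈ ℕ and a dominant weight χ ∈ P^+_{l′} such that the path p + χ := (p_k + χ)_{k≥0} belongs to 𝒫(χ,Λ); that is, p_k + χ − η̂_k is dominant for every k ≥ 0, where η_k = p_{k+1} − p_k. -/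
open scoped BigOperators

namespace BF

/-- every `Λ`-path can be shifted by a suitable dominant weight `χ` so as
to become a `(χ,Λ)`-restricted path. -/
theorem exists_dominant_shift (n : ℕ) [NeZero n] (hn : 2 ≤ n) (l : ℕ)
    (v : Fin l → ℕ) (hv : SortedV n l v) (p : ℕ → ZMod n → ℤ)
    (hp : IsPath n l (wtOf n v) p) :
    ∃ (l' : ℕ) (χ : ZMod n → ℤ), Dominant n χ ∧ (∑ i, χ i) = (l' : ℤ) ∧
      IsRes n l χ (wtOf n v) (fun k i => p k i + χ i) := by
  obtain ⟨hstep, K, hK⟩ := hp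
  set B : ℕ := (Finset.range K ×ˢ (Finset.univ : Finset (ZMod n))).sup
      (fun x => (-(p x.1 x.2)).toNat) with hB
  refine ⟨n * (l + B), fun _ => ((l + B : ℕ) : ℤ), fun _ => Int.natCast_nonneg _, ?_, ?_, ?_⟩
  · simp [Finset.sum_const, Finset.card_univ, ZMod.card]
  · constructor
    · intro k
      have h : (fun i => (p (k + 1) i + ((l + B : ℕ) : ℤ)) - (p k i + ((l + B : ℕ) : ℤ)))
          = fun i => p (k + 1) i - p k i := by funext i; ring
      simpa [h] using hstep k
    · refine ⟨K, fun k hk => ?_⟩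
      funext i
      have := congrFun (hK k hk) i
      simp only [gsp] at this ⊢
      linarith
  · intro k
    obtain ⟨e, he, hd⟩ := hstep k
    refine ⟨e, he, ?_, ?_⟩
    · funext i
      have := congrFun hd i
      simp only [stepWt] at this ⊢
      linarith
    · intro i
      have h1 : (e i : ℤ) ≤ (l : ℤ) := by
        exact_mod_cast he ▸ Finset.single_le_sum (fun _ _ => Nat.zero_le _) (Finset.mem_univ i)
      rcases lt_or_ge k K with hkK | hkK
      · have hmem : (k, i) ∈ Finset.range K ×ˢ (Finset.univ : Finset (ZMod n)) := by
          simp [Finset.mem_product, hkK]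
        have h2 : (-(p k i)).toNat ≤ B := hB ▸ Finset.le_sup (f := fun x : ℕ × ZMod n => (-(p x.1 x.2)).toNat) hmem
        have h3 : -(p k i) ≤ ((-(p k i)).toNat : ℤ) := Int.self_le_toNat _
        have h4 : ((-(p k i)).toNat : ℤ) ≤ (B : ℤ) := by exact_mod_cast h2
        push_cast
        linarith
      · have := congrFun (hK k hkK) i
        have h0 : 0 ≤ p k i := by
          rw [this]
          exact Int.natCast_nonneg _
        push_cast
        linarith

end BF
end
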